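/- (T-operation) Let G be a finite graph, T ⊆ V(G), and x, y ∈ T with xy ∈ E(G). Let G₁ = G/xy be the graph obtained by contracting xy (keeping multiple edges, removing loops), with T₁ = (T ∖ {x,y}) ∪ {v_{xy}}. Then in model E₃ (each edge colored red/blue uniformly and independently; walks change color only at transversal vertices), for all u, v ∈ V(G) and each i ∈ {0,1}, the probability P_G(u₀ → v_i) equals the corresponding probability P_{G₁}(u₀ → v_i) (with u, v replaced by v_{xy} when appropriate). -/

import Mathlib

open scoped Classical

noncomputable section

/-- Indicator of a proposition, as a real number. -/
def pInd (P : Prop) : ℝ := if P then 1 else 0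

/-- A finite multigraph without loops on vertex set `V`. -/
structure Multigraph (V : Type) where
  E : Type
  fintypeE : Fintype E
  decEqE : DecidableEq E
  ends : E → Sym2 V
  not_isDiag : ∀ e, ¬ (ends e).IsDiag

attribute [instance] Multigraph.fintypeE Multigraph.decEqE

variable {V : Type}

/-- Colored presence graph of model E₃ on a multigraph: the copy of edge `e` lives in
the layer given by its color `c e`; vertical edges at `T`. -/
def Multigraph.ccGraph (M : Multigraph V) (c : M.E → Bool) (T : Set V) :
    SimpleGraph (V × Bool) where
  Adj a b := (a.2 = b.2 ∧ ∃ e, M.ends e = s(a.1, b.1) ∧ c e = a.2) ∨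
    (a.1 = b.1 ∧ a.2 ≠ b.2 ∧ a.1 ∈ T)
  symm := by
    constructor
    intro a b h
    rcases h with ⟨h1, e, he, hc⟩ | ⟨h1, h2, h3⟩
    · exact Or.inl ⟨h1.symm, e, by rwa [Sym2.eq_swap], by rwa [← h1]⟩
    · exact Or.inr ⟨h1.symm, Ne.symm h2, h1 ▸ h3⟩
  loopless := by
    constructor
    rintro a (⟨h1, e, he, hc⟩ | ⟨h1, h2, h3⟩)
    · exact M.not_isDiag e (by rw [he]; exact Sym2.mk_isDiag_iff.mpr rfl)
    · exact h2 rfl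

/-- Connection probability in model E₃^T on a multigraph. -/
def PE3M (M : Multigraph V) (T : Set V) (x y : V × Bool) : ℝ :=
  (∑ c : M.E → Bool, pInd ((M.ccGraph c T).Reachable x y)) / 2 ^ Fintype.card M.E

/-- Restriction of a multigraph to the edges satisfying `P` (edge deletion). -/
def Multigraph.restrict (M : Multigraph V) (P : M.E → Prop) : Multigraph V where
  E := {e : M.E // P e}
  fintypeE := Subtype.fintype _
  decEqE := inferInstance
  ends e := M.ends e.1
  not_isDiag e := M.not_isDiag e.1

/-- Contraction of the vertex `x` into the vertex `y`: every edge endpoint equal to `x`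
is renamed `y`, and the edges that become loops are removed. -/
def Multigraph.contract [DecidableEq V] (M : Multigraph V) (x y : V) : Multigraph V where
  E := {e : M.E // ¬ (Sym2.map (fun w => if w = x then y else w) (M.ends e)).IsDiag}
  fintypeE := Subtype.fintype _
  decEqE := inferInstance
  ends e := Sym2.map (fun w => if w = x then y else w) (M.ends e.1)
  not_isDiag e := e.2

/-!
Fix a colouring. Since `x, y ∈ T` are joined by an edge, `(x, b)` and `(y, b')` are connected
in the layered graph for all layers `b, b'`, so every vertex is connected to its image under
merging `x` into `y`, within its layer. Hence an edge of the contracted graph lifts to a path of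
the original one, while an edge of the original one maps to an edge or, for the copies of `xy`
that become loops, to a single vertex: reachability between corresponding vertices agrees for
every colouring. The contracted graph is coloured by restriction, and the colours of the deleted
loops average out.
-/

theorem SimpleGraph.Reachable.map_of_adj {W W' : Type*} {G : SimpleGraph W} {H : SimpleGraph W'}
    (f : W → W') (h : ∀ a b, G.Adj a b → H.Reachable (f a) (f b)) {a b : W}
    (hab : G.Reachable a b) : H.Reachable (f a) (f b) := by
  rw [SimpleGraph.reachable_eq_reflTransGen] at h hab ⊢
  exact Relation.ReflTransGen.lift' f h _ _ hab

theorem Fintype.sum_comp_restrict_div_two_pow_card {α : Type*} [Fintype α] [DecidableEq α]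
    (P : α → Prop) [DecidablePred P] (g : ({a // P a} → Bool) → ℝ) :
    (∑ c : α → Bool, g (fun a => c a.1)) / 2 ^ Fintype.card α =
      (∑ c : {a // P a} → Bool, g c) / 2 ^ Fintype.card {a // P a} := by
  have hsum : ∑ c : α → Bool, g (fun a => c a.1) =
      2 ^ Fintype.card {a // ¬ P a} * ∑ c : {a // P a} → Bool, g c := by
    rw [Fintype.sum_equiv (Equiv.piEquivPiSubtypeProd P fun _ => Bool)
      (fun c => g fun a => c a.1) (fun p => g p.1) fun _ => rfl, Fintype.sum_prod_type]
    simp [Finset.sum_const, Finset.mul_sum]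
  have hcard : Fintype.card α = Fintype.card {a // ¬ P a} + Fintype.card {a // P a} := by
    rw [Fintype.card_subtype_compl]
    have := Fintype.card_subtype_le P
    omega
  rw [hsum, hcard, pow_add, mul_div_mul_left _ _ (by positivity)]

namespace Multigraph

variable [DecidableEq V]

def contractVertex (x y w : V) : V := if w = x then y else w

lemma contractVertex_mem {T : Set V} {x y w : V} (hy : y ∈ T) (hw : w ∈ T) :
    contractVertex x y w ∈ T := by
  unfold contractVertex
  split_ifs <;> assumption

variable {M : Multigraph V} {T : Set V} {x y : V} {e₀ : M.E}

omit [DecidableEq V] in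
lemma ccGraph_reachable_of_ends (hx : x ∈ T) (hy : y ∈ T) (c : M.E → Bool)
    (he₀ : M.ends e₀ = s(x, y)) (b b' : Bool) :
    (M.ccGraph c T).Reachable (x, b) (y, b') := by
  have switch : ∀ w ∈ T, ∀ β β', (M.ccGraph c T).Reachable (w, β) (w, β') := by
    intro w hw β β'
    by_cases h : β = β'
    · rw [h]
    · exact SimpleGraph.Adj.reachable (Or.inr ⟨rfl, h, hw⟩)
  have cross : (M.ccGraph c T).Adj (x, c e₀) (y, c e₀) := Or.inl ⟨rfl, e₀, he₀, rfl⟩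
  exact ((switch x hx b (c e₀)).trans cross.reachable).trans (switch y hy (c e₀) b')

lemma ccGraph_reachable_contractVertex (hx : x ∈ T) (hy : y ∈ T) (c : M.E → Bool)
    (he₀ : M.ends e₀ = s(x, y)) (w : V) (b : Bool) :
    (M.ccGraph c T).Reachable (w, b) (contractVertex x y w, b) := by
  unfold contractVertex
  split_ifs with h
  · exact h ▸ ccGraph_reachable_of_ends hx hy c he₀ b b
  · rfl

lemma ccGraph_contract_reachable_of_adj (c : M.E → Bool) {a b : V × Bool}
    (h : (M.ccGraph c T).Adj a b) :
    ((M.contract x y).ccGraph (fun e => c e.1) (contractVertex x y '' T)).Reachable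
      (contractVertex x y a.1, a.2) (contractVertex x y b.1, b.2) := by
  rcases h with ⟨hcol, e, he, hc⟩ | ⟨hv, hne, hT⟩
  · have hends : Sym2.map (contractVertex x y) (M.ends e) =
        s(contractVertex x y a.1, contractVertex x y b.1) := by
      rw [he, Sym2.map_mk]
    by_cases hloop : (Sym2.map (contractVertex x y) (M.ends e)).IsDiag
    · rw [hends, Sym2.mk_isDiag_iff] at hloop
      rw [hloop, hcol]
    · exact SimpleGraph.Adj.reachable (Or.inl ⟨hcol, ⟨e, hloop⟩, hends, hc⟩)
  · exact SimpleGraph.Adj.reachable (Or.inr ⟨by rw [hv], hne, a.1, hT, rfl⟩)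

lemma ccGraph_reachable_contractVertex_of_ends (hx : x ∈ T) (hy : y ∈ T) (c : M.E → Bool)
    (he₀ : M.ends e₀ = s(x, y)) {e : M.E} {w₁ w₂ : V} (he : M.ends e = s(w₁, w₂)) :
    (M.ccGraph c T).Reachable (contractVertex x y w₁, c e) (contractVertex x y w₂, c e) :=
  have hedge : (M.ccGraph c T).Adj (w₁, c e) (w₂, c e) := Or.inl ⟨rfl, e, he, rfl⟩
  ((ccGraph_reachable_contractVertex hx hy c he₀ w₁ _).symm.trans hedge.reachable).trans
    (ccGraph_reachable_contractVertex hx hy c he₀ w₂ _)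

lemma ccGraph_reachable_of_contract_adj (hx : x ∈ T) (hy : y ∈ T) (c : M.E → Bool)
    (he₀ : M.ends e₀ = s(x, y)) {a b : V × Bool}
    (h : ((M.contract x y).ccGraph (fun e => c e.1) (contractVertex x y '' T)).Adj a b) :
    (M.ccGraph c T).Reachable a b := by
  obtain ⟨p, β⟩ := a
  obtain ⟨q, β'⟩ := b
  rcases h with ⟨rfl, e, he, rfl⟩ | ⟨rfl, hne, t, ht, hpt⟩
  · obtain ⟨⟨w₁, w₂⟩, hw⟩ := Quot.exists_rep (M.ends e.1)
    change Sym2.map (contractVertex x y) (M.ends e.1) = s(p, q) at he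
    rw [← hw, Sym2.map_mk, Sym2.eq_iff] at he
    rcases he with ⟨rfl, rfl⟩ | ⟨rfl, rfl⟩
    · exact ccGraph_reachable_contractVertex_of_ends hx hy c he₀ hw.symm
    · exact (ccGraph_reachable_contractVertex_of_ends hx hy c he₀ hw.symm).symm
  · exact SimpleGraph.Adj.reachable (Or.inr ⟨rfl, hne, hpt ▸ contractVertex_mem hy ht⟩)

lemma ccGraph_reachable_iff_contract (hx : x ∈ T) (hy : y ∈ T) (c : M.E → Bool)
    (he₀ : M.ends e₀ = s(x, y)) (a b : V × Bool) :
    (M.ccGraph c T).Reachable a b ↔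
      ((M.contract x y).ccGraph (fun e => c e.1) (contractVertex x y '' T)).Reachable
        (contractVertex x y a.1, a.2) (contractVertex x y b.1, b.2) := by
  refine ⟨SimpleGraph.Reachable.map_of_adj (fun a : V × Bool => (contractVertex x y a.1, a.2))
    fun _ _ => ccGraph_contract_reachable_of_adj c, fun h => ?_⟩
  have h' := h.map_of_adj id fun _ _ => ccGraph_reachable_of_contract_adj hx hy c he₀
  exact ((ccGraph_reachable_contractVertex hx hy c he₀ a.1 a.2).trans h').trans
    (ccGraph_reachable_contractVertex hx hy c he₀ b.1 b.2).symm

end Multigraph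

theorem PE3M_T_operation_general [DecidableEq V] (M : Multigraph V) (T : Set V) (x y : V)
    (hx : x ∈ T) (hy : y ∈ T) (hedge : ∃ e, M.ends e = s(x, y))
    (u v : V) (i : Bool) :
    PE3M M T (u, false) (v, i) =
      PE3M (M.contract x y) ((fun w => if w = x then y else w) '' T)
        ((fun w => if w = x then y else w) u, false)
        ((fun w => if w = x then y else w) v, i) := by
  obtain ⟨e₀, he₀⟩ := hedge
  simp only [PE3M, Multigraph.ccGraph_reachable_iff_contract hx hy _ he₀]
  exact Fintype.sum_comp_restrict_div_two_pow_card _ fun c =>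
    pInd (((M.contract x y).ccGraph c _).Reachable _ _)

/-- T-operation: if `x, y ∈ T` are joined by an edge, then contracting that edge
(`x` is identified into `y = v_{xy}`, with `T₁ = (T ∖ {x,y}) ∪ {v_{xy}}`) preserves all
connection probabilities of model E₃. -/
theorem PE3M_T_operation [DecidableEq V] (M : Multigraph V) (T : Set V) (x y : V)
    (hx : x ∈ T) (hy : y ∈ T) (hxy : x ≠ y) (hedge : ∃ e, M.ends e = s(x, y))
    (u v : V) (i : Bool) :
    PE3M M T (u, false) (v, i) =
      PE3M (M.contract x y) ((fun w => if w = x then y else w) '' T)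
        ((fun w => if w = x then y else w) u, false)
        ((fun w => if w = x then y else w) v, i) :=
  PE3M_T_operation_general M T x y hx hy hedge u v i
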